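/- arXiv:2210.01530 — 2 statements merged into one kernel-verified Lean document; each statement's English description precedes it below -/
import Mathlib

section
/- Let the pair (A, B), with A ∈ ℝⁿˣⁿ and B ∈ ℝⁿˣᵐ, be controllable, and let ñ be the minimal natural number such that rank[B, AB, …, A^{ñ−1}B] = n. Then any solution Y₀ ∈ ℝᵐˣⁿ, G₀ ∈ ℝⁿˣⁿ of the linear algebraic equations A G₀ − G₀ A + B Y₀ = A and G₀ B = 0 is such that: (i) the matrix G₀ − Iₙ is invertible; (ii) for every μ ∈ [−1, 1/ñ], the matrix G_d = Iₙ + μG₀ is anti-Hurwitz (every eigenvalue of G_d has positive real part); (iii) the matrix A₀ = A + B Y₀ (G₀ − Iₙ)^{−1} satisfies the identities A₀ G_d = (G_d + μIₙ) A₀ and G_d B = B. -/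
/-!
From `A G₀ - G₀ A + B Y₀ = A` and `G₀ B = 0` one gets, by induction on `j`,
`G₀ Aʲ B = -j Aʲ B + (a combination of B, AB, …, A^{j-1}B)`. Hence the Pochhammer product
`G₀ (G₀ + 1) ⋯ (G₀ + ñ - 1)` annihilates every block of `[B, AB, …, A^{ñ-1}B]`, whose columns
span `ℝⁿ`; so it vanishes and every eigenvalue of `G₀` is one of `0, -1, …, -(ñ - 1)`.
Then `1` is not an eigenvalue of `G₀`, the eigenvalues `1 - μ k` (`k < ñ`) of `I + μ G₀` are
positive for `μ ≤ 1/ñ`, and (iii) follows from `A₀ G₀ = (G₀ + I) A₀`.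
-/

open Matrix

noncomputable section

/-- `G` is anti-Hurwitz: every (complex) eigenvalue of `G` has positive real part. -/
def AntiHurwitz {n : ℕ} (G : Matrix (Fin n) (Fin n) ℝ) : Prop :=
  ∀ z : ℂ, (G.map (algebraMap ℝ ℂ)).charpoly.IsRoot z → 0 < z.re

/-- The block matrix `[B, AB, …, A^{k-1}B]`. -/
def ctrbMat {n m : ℕ} (A : Matrix (Fin n) (Fin n) ℝ) (B : Matrix (Fin n) (Fin m) ℝ)
    (k : ℕ) : Matrix (Fin n) (Fin k × Fin m) ℝ :=
  Matrix.of fun i p => (A ^ (p.1 : ℕ) * B) i p.2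

open Polynomial Finset

theorem eval_eq_zero_of_mem_spectrum_of_aeval_eq_zero {𝕜 A : Type*} [Field 𝕜] [Ring A]
    [Algebra 𝕜 A] {a : A} {p : 𝕜[X]} (hp : aeval a p = 0) {z : 𝕜} (hz : z ∈ spectrum 𝕜 a) :
    p.eval z = 0 := by
  have h := spectrum.subset_polynomial_aeval a p ⟨z, hz, rfl⟩
  rw [hp, spectrum.mem_iff, sub_zero] at h
  by_contra hne
  exact h ((IsUnit.mk0 _ hne).map (algebraMap 𝕜 A))

theorem exists_natCast_eq_neg_of_aeval_ascPochhammer_eq_zero {𝕜 A : Type*} [Field 𝕜] [Ring A]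
    [Algebra 𝕜 A] {a : A} {N : ℕ} (ha : aeval a (ascPochhammer 𝕜 N) = 0) {z : 𝕜}
    (hz : z ∈ spectrum 𝕜 a) : ∃ k < N, (k : 𝕜) = -z :=
  (ascPochhammer_eval_eq_zero_iff N z).mp (eval_eq_zero_of_mem_spectrum_of_aeval_eq_zero ha hz)

theorem isUnit_sub_one_of_aeval_ascPochhammer_eq_zero {𝕜 A : Type*} [Field 𝕜] [CharZero 𝕜]
    [Ring A] [Algebra 𝕜 A] {a : A} {N : ℕ} (ha : aeval a (ascPochhammer 𝕜 N) = 0) :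
    IsUnit (a - 1) := by
  have h1 : (1 : 𝕜) ∉ spectrum 𝕜 a := fun h1 => by
    obtain ⟨k, -, hk⟩ := exists_natCast_eq_neg_of_aeval_ascPochhammer_eq_zero ha h1
    have : ((k + 1 : ℕ) : 𝕜) = 0 := by push_cast; rw [hk]; ring
    exact Nat.succ_ne_zero k (Nat.cast_eq_zero.mp this)
  rw [spectrum.notMem_iff, map_one] at h1
  simpa using h1.neg

theorem exists_mem_spectrum_of_mem_spectrum_one_add_smul {𝕜 A : Type*} [Field 𝕜]
    [IsAlgClosed 𝕜] [Ring A] [Algebra 𝕜 A] [FiniteDimensional 𝕜 A] {a : A} {μ z : 𝕜}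
    (hz : z ∈ spectrum 𝕜 (1 + μ • a)) : ∃ w ∈ spectrum 𝕜 a, 1 + μ * w = z := by
  have : Nontrivial A := by
    by_contra h
    rw [not_nontrivial_iff_subsingleton] at h
    simp [spectrum.of_subsingleton] at hz
  have hq : 1 + μ • a = aeval a (C 1 + C μ * X) := by
    simp [Algebra.smul_def]
  rw [hq, spectrum.map_polynomial_aeval_of_nonempty _ _
    (spectrum.nonempty_of_isAlgClosed_of_finiteDimensional 𝕜 a)] at hz
  simpa using hz

theorem one_sub_mul_natCast_pos {μ : ℝ} {k N : ℕ} (hk : k < N) (hμ : μ ≤ (N : ℝ)⁻¹) :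
    0 < 1 - μ * k := by
  rcases le_or_gt μ 0 with hμ0 | hμ0
  · nlinarith [(k.cast_nonneg : (0 : ℝ) ≤ k)]
  · have hN : (0 : ℝ) < N := by exact_mod_cast (Nat.zero_le k).trans_lt hk
    have hkN : (k : ℝ) < N := by exact_mod_cast hk
    have : μ * k < 1 :=
      calc μ * k < μ * N := by gcongr
        _ ≤ (N : ℝ)⁻¹ * N := by gcongr
        _ = 1 := inv_mul_cancel₀ hN.ne'
    linarith

theorem antiHurwitz_one_add_smul {n : ℕ} {G : Matrix (Fin n) (Fin n) ℝ} {N : ℕ}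
    (hG : aeval G (ascPochhammer ℝ N) = 0) {μ : ℝ} (hμ : μ ≤ (N : ℝ)⁻¹) :
    AntiHurwitz (1 + μ • G) := by
  intro z hz
  set Gc := G.map (algebraMap ℝ ℂ)
  have hGc : aeval Gc (ascPochhammer ℂ N) = 0 := by
    rw [← ascPochhammer_map (algebraMap ℝ ℂ), aeval_map_algebraMap]
    have h := aeval_algHom_apply (Algebra.ofId ℝ ℂ).mapMatrix G (ascPochhammer ℝ N)
    rwa [hG, map_zero] at h
  have hz' : z ∈ spectrum ℂ (1 + (μ : ℂ) • Gc) := by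
    have hmap : (1 + μ • G).map (algebraMap ℝ ℂ) = 1 + (μ : ℂ) • Gc := by
      ext i j
      by_cases hij : i = j <;> simp [Gc, hij]
    rw [hmap] at hz
    exact mem_spectrum_iff_isRoot_charpoly.mpr hz
  obtain ⟨w, hw, rfl⟩ := exists_mem_spectrum_of_mem_spectrum_one_add_smul hz'
  obtain ⟨k, hk, hkw⟩ := exists_natCast_eq_neg_of_aeval_ascPochhammer_eq_zero hGc hw
  obtain rfl : w = -k := by rw [hkw, neg_neg]
  simpa using one_sub_mul_natCast_pos hk hμ

theorem Matrix.eq_zero_of_mul_eq_zero_of_rank_eq_card {K l m κ : Type*} [Field K] [Fintype l]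
    [Fintype m] [Fintype κ] {M : Matrix l m K} {C : Matrix m κ K}
    (hC : C.rank = Fintype.card m) (h : M * C = 0) : M = 0 := by
  have hM : M.rank = 0 := by
    have := rank_add_rank_le_card_of_mul_eq_zero h
    omega
  rw [rank, Submodule.finrank_eq_zero, LinearMap.range_eq_bot] at hM
  classical
  exact Matrix.toLin'.map_eq_zero_iff.mp hM

section Commutation

variable {R ι κ : Type*} [CommRing R] [Fintype ι] [DecidableEq ι] [Fintype κ]
  {A G : Matrix ι ι R} {B : Matrix ι κ R} {Y : Matrix κ ι R}

theorem exists_mul_pow_mul_eq_neg_smul_add_sum (hGA : G * A = A * G + B * Y - A)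
    (hGB : G * B = 0) (j : ℕ) :
    ∃ C : ℕ → Matrix κ κ R,
      G * (A ^ j * B) = -(j : R) • (A ^ j * B) + ∑ i ∈ range j, A ^ i * B * C i := by
  induction j with
  | zero => exact ⟨0, by simp [hGB]⟩
  | succ j ih =>
    obtain ⟨C, hC⟩ := ih
    refine ⟨fun | 0 => Y * (A ^ j * B) | i + 1 => C i, ?_⟩
    calc G * (A ^ (j + 1) * B)
        = A * (G * (A ^ j * B)) + B * (Y * (A ^ j * B)) - A * (A ^ j * B) := by
          rw [pow_succ', Matrix.mul_assoc, ← Matrix.mul_assoc G A, hGA, Matrix.sub_mul,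
            Matrix.add_mul, Matrix.mul_assoc A G, Matrix.mul_assoc B]
      _ = _ := by
          rw [hC, sum_range_succ']
          simp only [Matrix.mul_add, Matrix.mul_smul, Matrix.mul_sum, pow_succ', pow_zero,
            Matrix.one_mul, Matrix.mul_assoc]
          push_cast
          module

theorem aeval_ascPochhammer_mul_pow_mul_eq_zero (hGA : G * A = A * G + B * Y - A)
    (hGB : G * B = 0) {i N : ℕ} (hi : i < N) :
    aeval G (ascPochhammer R N) * (A ^ i * B) = 0 := by
  induction N generalizing i with
  | zero => exact absurd hi (Nat.not_lt_zero i)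
  | succ N ih =>
    obtain ⟨C, hC⟩ := exists_mul_pow_mul_eq_neg_smul_add_sum hGA hGB i
    have lower : ∀ i' ∈ range i, aeval G (ascPochhammer R N) * (A ^ i' * B * C i') = 0 :=
      fun i' hi' => by rw [← Matrix.mul_assoc, ih (by grind), Matrix.zero_mul]
    have hshift : (G + (N : Matrix ι ι R)) * (A ^ i * B)
        = ((N : R) - i) • (A ^ i * B) + ∑ i' ∈ range i, A ^ i' * B * C i' := by
      rw [Matrix.add_mul, hC, ← map_natCast (algebraMap R (Matrix ι ι R)),
        Algebra.algebraMap_eq_smul_one, Matrix.smul_mul, Matrix.one_mul]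
      module
    rw [ascPochhammer_succ_right, map_mul, Matrix.mul_assoc, map_add, aeval_X, map_natCast,
      hshift, Matrix.mul_add, Matrix.mul_smul, Matrix.mul_sum, sum_eq_zero lower, add_zero]
    rcases (Nat.lt_succ_iff.mp hi).eq_or_lt with rfl | h
    · rw [sub_self, zero_smul]
    · rw [ih h, smul_zero]

theorem add_mul_nonsing_inv_mul_eq (hGA : G * A = A * G + B * Y - A) (hGB : G * B = 0)
    (hG : IsUnit (G - 1)) :
    (A + B * Y * (G - 1)⁻¹) * G = (G + 1) * (A + B * Y * (G - 1)⁻¹) := by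
  have hinv : (G - 1)⁻¹ * G = 1 + (G - 1)⁻¹ :=
    calc (G - 1)⁻¹ * G = (G - 1)⁻¹ * (G - 1) + (G - 1)⁻¹ := by noncomm_ring
      _ = 1 + (G - 1)⁻¹ := by rw [nonsing_inv_mul _ ((isUnit_iff_isUnit_det _).mp hG)]
  have hGBY : G * (B * Y * (G - 1)⁻¹) = 0 := by
    simp only [← Matrix.mul_assoc, hGB, Matrix.zero_mul]
  calc (A + B * Y * (G - 1)⁻¹) * G = A * G + B * Y + B * Y * (G - 1)⁻¹ := by
        rw [Matrix.add_mul, Matrix.mul_assoc (B * Y), hinv, Matrix.mul_add, Matrix.mul_one,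
          add_assoc]
    _ = G * A + A + B * Y * (G - 1)⁻¹ := by rw [hGA]; abel
    _ = (G + 1) * (A + B * Y * (G - 1)⁻¹) := by
        rw [Matrix.add_mul, Matrix.mul_add, hGBY, Matrix.one_mul]; abel

end Commutation

theorem mul_one_add_smul_eq {R M : Type*} [CommRing R] [Ring M] [Algebra R M] {x g : M}
    (h : x * g = (g + 1) * x) (μ : R) : x * (1 + μ • g) = ((1 + μ • g) + μ • 1) * x := by
  rw [mul_add, mul_smul_comm, h]
  simp only [add_mul, smul_mul_assoc, smul_add, mul_one, one_mul]
  abel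

theorem mul_ctrbMat_apply {n m k : ℕ} {ι : Type*} [Fintype ι] (M : Matrix ι (Fin n) ℝ)
    (A : Matrix (Fin n) (Fin n) ℝ) (B : Matrix (Fin n) (Fin m) ℝ) (i : ι) (j : Fin k)
    (l : Fin m) : (M * ctrbMat A B k) i (j, l) = (M * (A ^ (j : ℕ) * B)) i l := by
  simp [Matrix.mul_apply, ctrbMat]

theorem aeval_ascPochhammer_eq_zero_of_rank_ctrbMat {n m N : ℕ}
    {A G : Matrix (Fin n) (Fin n) ℝ} {B : Matrix (Fin n) (Fin m) ℝ} {Y : Matrix (Fin m) (Fin n) ℝ}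
    (hGA : G * A = A * G + B * Y - A) (hGB : G * B = 0) (hN : (ctrbMat A B N).rank = n) :
    aeval G (ascPochhammer ℝ N) = 0 := by
  refine eq_zero_of_mul_eq_zero_of_rank_eq_card (C := ctrbMat A B N) (by simpa using hN) ?_
  ext i ⟨j, l⟩
  rw [mul_ctrbMat_apply, aeval_ascPochhammer_mul_pow_mul_eq_zero hGA hGB j.isLt]
  rfl

theorem homogeneous_design_part1_general
    {n m : ℕ} (A : Matrix (Fin n) (Fin n) ℝ) (B : Matrix (Fin n) (Fin m) ℝ)
    -- `ñ` is the minimal natural number with `rank [B, AB, …, A^{ñ-1}B] = n`: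
    (ntil : ℕ) (hntil : (ctrbMat A B ntil).rank = n ∧ ∀ k < ntil, (ctrbMat A B k).rank ≠ n)
    -- `(Y₀, G₀)` solves the linear algebraic equations:
    (Y₀ : Matrix (Fin m) (Fin n) ℝ) (G₀ : Matrix (Fin n) (Fin n) ℝ)
    (heq : A * G₀ - G₀ * A + B * Y₀ = A) (hGB : G₀ * B = 0) :
    -- (i) `G₀ - I` is invertible:
    IsUnit (G₀ - 1) ∧
    -- (ii) `G_d = I + μ G₀` is anti-Hurwitz for every `μ ∈ [-1, 1/ñ]`:
    (∀ μ : ℝ, μ ∈ Set.Icc (-1 : ℝ) ((ntil : ℝ)⁻¹) → AntiHurwitz (1 + μ • G₀)) ∧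
    -- (iii) `A₀ = A + B Y₀ (G₀ - I)⁻¹` satisfies the identities:
    (∀ μ : ℝ, μ ∈ Set.Icc (-1 : ℝ) ((ntil : ℝ)⁻¹) →
      (A + B * Y₀ * (G₀ - 1)⁻¹) * (1 + μ • G₀) =
        ((1 + μ • G₀) + μ • (1 : Matrix (Fin n) (Fin n) ℝ)) * (A + B * Y₀ * (G₀ - 1)⁻¹) ∧
      (1 + μ • G₀) * B = B) := by
  have hGA : G₀ * A = A * G₀ + B * Y₀ - A :=
    calc G₀ * A = A * G₀ + B * Y₀ - (A * G₀ - G₀ * A + B * Y₀) := by abel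
      _ = A * G₀ + B * Y₀ - A := by rw [heq]
  have hP := aeval_ascPochhammer_eq_zero_of_rank_ctrbMat hGA hGB hntil.1
  have hU := isUnit_sub_one_of_aeval_ascPochhammer_eq_zero hP
  refine ⟨hU, fun μ hμ => antiHurwitz_one_add_smul hP hμ.2, fun μ _ => ⟨?_, ?_⟩⟩
  · exact mul_one_add_smul_eq (add_mul_nonsing_inv_mul_eq hGA hGB hU) μ
  · rw [Matrix.add_mul, Matrix.one_mul, Matrix.smul_mul, hGB, smul_zero, add_zero]

theorem homogeneous_design_part1
    {n m : ℕ} (A : Matrix (Fin n) (Fin n) ℝ) (B : Matrix (Fin n) (Fin m) ℝ)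
    -- the pair `(A, B)` is controllable:
    (hctrb : (ctrbMat A B n).rank = n)
    -- `ñ` is the minimal natural number with `rank [B, AB, …, A^{ñ-1}B] = n`:
    (ntil : ℕ) (hntil : (ctrbMat A B ntil).rank = n ∧ ∀ k < ntil, (ctrbMat A B k).rank ≠ n)
    -- `(Y₀, G₀)` solves the linear algebraic equations:
    (Y₀ : Matrix (Fin m) (Fin n) ℝ) (G₀ : Matrix (Fin n) (Fin n) ℝ)
    (heq : A * G₀ - G₀ * A + B * Y₀ = A) (hGB : G₀ * B = 0) :
    -- (i) `G₀ - I` is invertible: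
    IsUnit (G₀ - 1) ∧
    -- (ii) `G_d = I + μ G₀` is anti-Hurwitz for every `μ ∈ [-1, 1/ñ]`:
    (∀ μ : ℝ, μ ∈ Set.Icc (-1 : ℝ) ((ntil : ℝ)⁻¹) → AntiHurwitz (1 + μ • G₀)) ∧
    -- (iii) `A₀ = A + B Y₀ (G₀ - I)⁻¹` satisfies the identities:
    (∀ μ : ℝ, μ ∈ Set.Icc (-1 : ℝ) ((ntil : ℝ)⁻¹) →
      (A + B * Y₀ * (G₀ - 1)⁻¹) * (1 + μ • G₀) =
        ((1 + μ • G₀) + μ • (1 : Matrix (Fin n) (Fin n) ℝ)) * (A + B * Y₀ * (G₀ - 1)⁻¹) ∧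
      (1 + μ • G₀) * B = B) :=
  homogeneous_design_part1_general A B ntil hntil Y₀ G₀ heq hGB
end
end

section
/- Let x ∈ C¹(ℝ, ℝ³) and let J_ℓ(X) = Σ_{n≥0} Xⁿ/(n+1)! denote the left Jacobian. Then at every time t₀ with ‖x(t₀)‖ < 2π, the matrix J_ℓ(x(t₀)^∧) is invertible, and the map t ↦ (J_ℓ(x(t)^∧))^{−1} is differentiable at t₀ with derivative continuous on the open set {t : ‖x(t)‖ < 2π}. -/
/-!
Since `(v^∧)³ = -‖v‖² v^∧`, the series `J_ℓ(v^∧)` collapses to `1 + a(-‖v‖²) v^∧ + b(-‖v‖²) (v^∧)²`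
with the entire functions `a(s) = Σ sᵏ/(2k+2)!` and `b(s) = Σ sᵏ/(2k+3)!`, so `v ↦ J_ℓ(v^∧)` is
smooth. Comparing with the series of `cos` and `sin` gives `θ² a(-θ²) = 1 - cos θ` and
`θ³ b(-θ²) = θ - sin θ`, hence `θ² det J_ℓ(v^∧) = sin² θ + (1 - cos θ)² = 2 (1 - cos θ)` for
`θ = ‖v‖`, which is positive when `0 < θ < 2π`. On `{t : ‖x(t)‖ < 2π}` the curve `t ↦ J_ℓ(x(t)^∧)`
is thus C¹ with nonvanishing determinant, and Cramer's rule `A⁻¹ = (det A)⁻¹ • adj A` makes its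
inverse C¹ there.
-/

open Matrix

attribute [local instance] Matrix.normedAddCommGroup Matrix.normedSpace

noncomputable section

/-- The hat map `ℝ³ → 𝔰𝔬(3)`. -/
def hat (x : Fin 3 → ℝ) : Matrix (Fin 3) (Fin 3) ℝ :=
  !![0, -x 2, x 1; x 2, 0, -x 0; -x 1, x 0, 0]

/-- The left Jacobian `J_ℓ(X) = Σ_{k≥0} Xᵏ/(k+1)!`. -/
def leftJacobian (X : Matrix (Fin 3) (Fin 3) ℝ) : Matrix (Fin 3) (Fin 3) ℝ :=
  ∑' k : ℕ, ((Nat.factorial (k + 1) : ℝ)⁻¹) • X ^ k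

open Nat Real

theorem summable_mul_pow_of_abs_le_inv_factorial {c : ℕ → ℝ} (hc : ∀ n, |c n| ≤ (n ! : ℝ)⁻¹)
    (s : ℝ) : Summable fun n => c n * s ^ n := by
  refine .of_norm_bounded (Real.summable_pow_div_factorial |s|) fun n => ?_
  rw [norm_mul, norm_pow, Real.norm_eq_abs, Real.norm_eq_abs, div_eq_inv_mul]
  gcongr
  exact hc n

theorem contDiff_tsum_mul_pow_of_abs_le_inv_factorial {c : ℕ → ℝ}
    (hc : ∀ n, |c n| ≤ (n ! : ℝ)⁻¹) {k : WithTop ℕ∞} :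
    ContDiff ℝ k fun s : ℝ => ∑' n, c n * s ^ n := by
  set p := FormalMultilinearSeries.ofScalars ℝ c
  have hp : p.radius = ⊤ := p.radius_eq_top_of_summable_norm fun r => by
    simpa [p, FormalMultilinearSeries.ofScalars_norm] using
      summable_mul_pow_of_abs_le_inv_factorial (c := fun n => |c n|) (by simpa using hc) r
  have hsum : p.sum = fun s : ℝ => ∑' n, c n * s ^ n := by
    ext s
    simp [p, FormalMultilinearSeries.sum, mul_comm]
  rw [← hsum]
  refine AnalyticOnNhd.contDiff fun s _ => ?_
  exact (p.hasFPowerSeriesOnBall (by simp [hp])).analyticAt_of_mem (by simp [hp])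

def leftJacobianCoeff₁ (s : ℝ) : ℝ := ∑' k : ℕ, ((2 * k + 2)! : ℝ)⁻¹ * s ^ k

def leftJacobianCoeff₂ (s : ℝ) : ℝ := ∑' k : ℕ, ((2 * k + 3)! : ℝ)⁻¹ * s ^ k

theorem abs_inv_factorial_le_of_le {k m : ℕ} (hm : k ≤ m) : |(m ! : ℝ)⁻¹| ≤ (k ! : ℝ)⁻¹ := by
  rw [abs_of_nonneg (by positivity)]
  exact inv_anti₀ (by positivity) (mod_cast Nat.factorial_le hm)

theorem hasSum_leftJacobianCoeff₁ (s : ℝ) :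
    HasSum (fun k : ℕ => ((2 * k + 2)! : ℝ)⁻¹ * s ^ k) (leftJacobianCoeff₁ s) :=
  (summable_mul_pow_of_abs_le_inv_factorial
    (fun _ => abs_inv_factorial_le_of_le (by omega)) s).hasSum

theorem hasSum_leftJacobianCoeff₂ (s : ℝ) :
    HasSum (fun k : ℕ => ((2 * k + 3)! : ℝ)⁻¹ * s ^ k) (leftJacobianCoeff₂ s) :=
  (summable_mul_pow_of_abs_le_inv_factorial
    (fun _ => abs_inv_factorial_le_of_le (by omega)) s).hasSum

theorem contDiff_leftJacobianCoeff₁ {k : WithTop ℕ∞} : ContDiff ℝ k leftJacobianCoeff₁ :=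
  contDiff_tsum_mul_pow_of_abs_le_inv_factorial fun _ => abs_inv_factorial_le_of_le (by omega)

theorem contDiff_leftJacobianCoeff₂ {k : WithTop ℕ∞} : ContDiff ℝ k leftJacobianCoeff₂ :=
  contDiff_tsum_mul_pow_of_abs_le_inv_factorial fun _ => abs_inv_factorial_le_of_le (by omega)

section PowThree

variable {R A : Type*} [CommSemiring R] [Semiring A] [Algebra R A] {X : A} {s : R}

theorem pow_two_mul_add_one_of_pow_three (h : X ^ 3 = s • X) (k : ℕ) :
    X ^ (2 * k + 1) = s ^ k • X := by
  induction k with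
  | zero => simp
  | succ k ih =>
    rw [show 2 * (k + 1) + 1 = 2 * k + 1 + 2 by ring, pow_add, ih, smul_mul_assoc, ← pow_succ' X 2,
      h, smul_smul, pow_succ]

theorem pow_two_mul_add_two_of_pow_three (h : X ^ 3 = s • X) (k : ℕ) :
    X ^ (2 * k + 2) = s ^ k • X ^ 2 := by
  rw [pow_succ, pow_two_mul_add_one_of_pow_three h, smul_mul_assoc, ← pow_two]

end PowThree

theorem leftJacobian_eq_of_pow_three {X : Matrix (Fin 3) (Fin 3) ℝ} {s : ℝ} (h : X ^ 3 = s • X) :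
    leftJacobian X = 1 + leftJacobianCoeff₁ s • X + leftJacobianCoeff₂ s • X ^ 2 := by
  have hodd : HasSum (fun k : ℕ => ((2 * k + 1 + 1)! : ℝ)⁻¹ • X ^ (2 * k + 1))
      (leftJacobianCoeff₁ s • X) := by
    convert (hasSum_leftJacobianCoeff₁ s).smul_const X using 1
    ext1 k
    rw [pow_two_mul_add_one_of_pow_three h, smul_smul]
  have heven : HasSum (fun k : ℕ => ((2 * k + 1 + 1 + 1)! : ℝ)⁻¹ • X ^ (2 * k + 1 + 1))
      (leftJacobianCoeff₂ s • X ^ 2) := by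
    convert (hasSum_leftJacobianCoeff₂ s).smul_const (X ^ 2) using 1
    ext1 k
    rw [pow_two_mul_add_two_of_pow_three h, smul_smul]
  have hshift := (hasSum_nat_add_iff (f := fun k : ℕ => ((k + 1)! : ℝ)⁻¹ • X ^ k) 1).mp
    (hodd.even_add_odd heven)
  rw [leftJacobian, hshift.tsum_eq]
  simp only [Finset.range_one, Finset.sum_singleton, zero_add, factorial_one, cast_one, inv_one,
    pow_zero, one_smul]
  abel

theorem sq_mul_leftJacobianCoeff₁_neg_sq (t : ℝ) :
    t ^ 2 * leftJacobianCoeff₁ (-t ^ 2) = 1 - cos t := by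
  have hcos := ((hasSum_nat_add_iff' 1).mpr (hasSum_cos t)).neg
  have hterm (n : ℕ) : t ^ 2 * (((2 * n + 2)! : ℝ)⁻¹ * (-t ^ 2) ^ n) =
      -((-1) ^ (n + 1) * t ^ (2 * (n + 1)) / (2 * (n + 1))!) := by
    rw [show 2 * (n + 1) = 2 * n + 2 by ring, neg_pow, ← pow_mul]
    ring
  have h := (hasSum_leftJacobianCoeff₁ (-t ^ 2)).mul_left (t ^ 2)
  simp only [hterm] at h
  rw [h.unique hcos]
  simp

theorem pow_three_mul_leftJacobianCoeff₂_neg_sq (t : ℝ) :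
    t ^ 3 * leftJacobianCoeff₂ (-t ^ 2) = t - sin t := by
  have hsin := ((hasSum_nat_add_iff' 1).mpr (hasSum_sin t)).neg
  have hterm (n : ℕ) : t ^ 3 * (((2 * n + 3)! : ℝ)⁻¹ * (-t ^ 2) ^ n) =
      -((-1) ^ (n + 1) * t ^ (2 * (n + 1) + 1) / (2 * (n + 1) + 1)!) := by
    rw [show 2 * (n + 1) + 1 = 2 * n + 3 by ring, neg_pow, ← pow_mul]
    ring
  have h := (hasSum_leftJacobianCoeff₂ (-t ^ 2)).mul_left (t ^ 3)
  simp only [hterm] at h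
  rw [h.unique hsin]
  simp

theorem hat_pow_three (v : Fin 3 → ℝ) : hat v ^ 3 = -(v ⬝ᵥ v) • hat v := by
  ext i j
  fin_cases i <;> fin_cases j <;>
    simp [hat, pow_succ, Matrix.mul_apply, Fin.sum_univ_three, dotProduct] <;> ring

theorem det_one_add_smul_hat_add_smul_hat_sq (v : Fin 3 → ℝ) (a b : ℝ) :
    (1 + a • hat v + b • hat v ^ 2).det = (1 - (v ⬝ᵥ v) * b) ^ 2 + a ^ 2 * (v ⬝ᵥ v) := by
  simp [Matrix.det_fin_three, hat, Matrix.one_fin_three, pow_two,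
    Fin.sum_univ_three, dotProduct]
  ring

theorem det_leftJacobian_hat_pos {v : Fin 3 → ℝ} (hv : √(v ⬝ᵥ v) < 2 * π) :
    0 < (leftJacobian (hat v)).det := by
  set t := √(v ⬝ᵥ v)
  have hq : v ⬝ᵥ v = t ^ 2 :=
    (sq_sqrt (Finset.sum_nonneg fun i _ => mul_self_nonneg (v i))).symm
  rw [leftJacobian_eq_of_pow_three (hat_pow_three v), det_one_add_smul_hat_add_smul_hat_sq, hq]
  rcases (show 0 ≤ t from sqrt_nonneg _).eq_or_lt with ht | ht
  · rw [← ht]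
    norm_num
  have hcos : cos t < 1 := (cos_le_one t).lt_of_ne fun h =>
    ht.ne' ((cos_eq_one_iff_of_lt_of_lt (by linarith [pi_pos]) hv).mp h)
  have key : t ^ 2 * ((1 - t ^ 2 * leftJacobianCoeff₂ (-t ^ 2)) ^ 2 +
      leftJacobianCoeff₁ (-t ^ 2) ^ 2 * t ^ 2) = 2 * (1 - cos t) := by
    linear_combination (-(t - t ^ 3 * leftJacobianCoeff₂ (-t ^ 2) + sin t)) *
      pow_three_mul_leftJacobianCoeff₂_neg_sq t +
      (t ^ 2 * leftJacobianCoeff₁ (-t ^ 2) + 1 - cos t) * sq_mul_leftJacobianCoeff₁_neg_sq t +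
      sin_sq_add_cos_sq t
  exact pos_of_mul_pos_right (key ▸ by linarith) (sq_nonneg t)

section MatrixCalculus

variable {𝕜 E : Type*} [NontriviallyNormedField 𝕜] [NormedAddCommGroup E] [NormedSpace 𝕜 E]
  {m n p : Type*} [Fintype m] [Fintype n] [Fintype p] {k : WithTop ℕ∞} {x : E}

theorem contDiffAt_matrix_iff {f : E → Matrix m n 𝕜} :
    ContDiffAt 𝕜 k f x ↔ ∀ i j, ContDiffAt 𝕜 k (fun y => f y i j) x :=
  contDiffAt_pi.trans (forall_congr' fun _ => contDiffAt_pi)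

theorem ContDiffAt.matrix_mul {f : E → Matrix m n 𝕜} {g : E → Matrix n p 𝕜}
    (hf : ContDiffAt 𝕜 k f x) (hg : ContDiffAt 𝕜 k g x) :
    ContDiffAt 𝕜 k (fun y => f y * g y) x :=
  contDiffAt_matrix_iff.2 fun i j => by
    simp only [Matrix.mul_apply]
    exact .sum fun l _ => (contDiffAt_matrix_iff.1 hf i l).mul (contDiffAt_matrix_iff.1 hg l j)

theorem ContDiffAt.matrix_det [DecidableEq n] {f : E → Matrix n n 𝕜} (hf : ContDiffAt 𝕜 k f x) :
    ContDiffAt 𝕜 k (fun y => (f y).det) x := by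
  simp only [Matrix.det_apply']
  exact .sum fun σ _ =>
    contDiffAt_const.mul (contDiffAt_prod fun i _ => contDiffAt_matrix_iff.1 hf _ _)

theorem ContDiffAt.matrix_adjugate [DecidableEq n] {f : E → Matrix n n 𝕜}
    (hf : ContDiffAt 𝕜 k f x) : ContDiffAt 𝕜 k (fun y => (f y).adjugate) x :=
  contDiffAt_matrix_iff.2 fun i j => by
    simp only [Matrix.adjugate_apply]
    refine ContDiffAt.matrix_det (contDiffAt_matrix_iff.2 fun a b => ?_)
    simp only [Matrix.updateRow_apply]
    split_ifs
    exacts [contDiffAt_const, contDiffAt_matrix_iff.1 hf a b]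

theorem ContDiffAt.matrix_inv [DecidableEq n] {f : E → Matrix n n 𝕜} (hf : ContDiffAt 𝕜 k f x)
    (hx : (f x).det ≠ 0) : ContDiffAt 𝕜 k (fun y => (f y)⁻¹) x := by
  simp only [Matrix.inv_def, Ring.inverse_eq_inv']
  exact (hf.matrix_det.inv hx).smul hf.matrix_adjugate

end MatrixCalculus

theorem contDiff_hat {k : WithTop ℕ∞} : ContDiff ℝ k hat := by
  refine contDiff_iff_contDiffAt.2 fun v => contDiffAt_matrix_iff.2 fun i j => ?_
  fin_cases i <;> fin_cases j <;> simp [hat] <;> fun_prop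

theorem contDiff_leftJacobian_hat {k : WithTop ℕ∞} :
    ContDiff ℝ k fun v => leftJacobian (hat v) := by
  simp only [leftJacobian_eq_of_pow_three (hat_pow_three _), pow_two]
  refine contDiff_iff_contDiffAt.2 fun v => ?_
  have hq : ContDiffAt ℝ k (fun v : Fin 3 → ℝ => -(v ⬝ᵥ v)) v := by
    simp only [dotProduct]; fun_prop
  have hhat := contDiff_hat.contDiffAt (n := k) (x := v)
  exact (contDiffAt_const.add ((contDiff_leftJacobianCoeff₁.contDiffAt.comp v hq).smul hhat)).add
    ((contDiff_leftJacobianCoeff₂.contDiffAt.comp v hq).smul (hhat.matrix_mul hhat))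

theorem leftJacobian_inverse_differentiable
    (x : ℝ → Fin 3 → ℝ) (x' : ℝ → Fin 3 → ℝ)
    -- `x ∈ C¹(ℝ, ℝ³)`:
    (hx : ∀ t : ℝ, HasDerivAt x (x' t) t) (hx' : Continuous x') :
    (∀ t₀ : ℝ, Real.sqrt (x t₀ ⬝ᵥ x t₀) < 2 * Real.pi →
      IsUnit (leftJacobian (hat (x t₀))) ∧
      DifferentiableAt ℝ (fun t => (leftJacobian (hat (x t)))⁻¹) t₀) ∧
    ContinuousOn (fun t => deriv (fun s => (leftJacobian (hat (x s)))⁻¹) t)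
      {t : ℝ | Real.sqrt (x t ⬝ᵥ x t) < 2 * Real.pi} := by
  have hxC : ContDiff ℝ 1 x := contDiff_one_iff_deriv.2
    ⟨fun t => (hx t).differentiableAt, (funext fun t => (hx t).deriv) ▸ hx'⟩
  have hJ : ContDiff ℝ 1 fun t => leftJacobian (hat (x t)) := contDiff_leftJacobian_hat.comp hxC
  set S := {t : ℝ | √(x t ⬝ᵥ x t) < 2 * π}
  have hinv : ∀ t ∈ S, ContDiffAt ℝ 1 (fun s => (leftJacobian (hat (x s)))⁻¹) t := fun t ht =>
    hJ.contDiffAt.matrix_inv (det_leftJacobian_hat_pos ht).ne'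
  have hopen : IsOpen S :=
    isOpen_lt (hxC.continuous.dotProduct hxC.continuous).sqrt continuous_const
  refine ⟨fun t₀ ht₀ => ⟨?_, (hinv t₀ ht₀).differentiableAt one_ne_zero⟩, ?_⟩
  · exact (isUnit_iff_isUnit_det _).2 (det_leftJacobian_hat_pos ht₀).ne'.isUnit
  · exact ContDiffOn.continuousOn_deriv_of_isOpen (fun t ht => (hinv t ht).contDiffWithinAt)
      hopen le_rfl
end
end
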